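/- (Black) For every n ≥ 1, the set of all single-peaked linear orders on X_n with respect to the natural axis 1 < 2 < … < n is a maximal Condorcet domain. -/

import Mathlib

/-- A vote (strict linear order) on the set of alternatives `Fin n`, encoded as
the permutation sending each position (`0` = top) to the alternative placed in
that position. -/
abbrev Vote (n : ℕ) := Equiv.Perm (Fin n)

/-- `v` ranks `a` above `b`. -/
def Above {n : ℕ} (v : Vote n) (a b : Fin n) : Prop := v.symm a < v.symm b

instance {n : ℕ} (v : Vote n) (a b : Fin n) : Decidable (Above v a b) :=
  inferInstanceAs (Decidable (v.symm a < v.symm b))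

/-- The majority relation of a list of votes: `a` is ranked above `b` iff more
than half of the votes rank `a` above `b`. -/
def Maj {n : ℕ} (l : List (Vote n)) (a b : Fin n) : Prop :=
  l.length < 2 * l.countP (fun v => decide (Above v a b))

/-- A Condorcet domain: for every odd-length list of votes from `D` the
majority relation is a strict linear order on the alternatives. -/
def IsCondorcet {n : ℕ} (D : Set (Vote n)) : Prop :=
  ∀ l : List (Vote n), Odd l.length → (∀ v ∈ l, v ∈ D) →
    IsStrictTotalOrder (Fin n) (Maj l)

/-- The position (`0` = top) of `x` in the restriction of `v` to the triple
`{a, b, c}`: the number of elements of the triple ranked above `x` by `v`. -/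
def posIn {n : ℕ} (v : Vote n) (a b c x : Fin n) : ℕ :=
  (({a, b, c} : Finset (Fin n)).filter (fun y => Above v y x)).card

/-- The `i`-th smallest element of the triple `a < b < c` (`i : Fin 3`,
0-indexed). -/
def tElem {n : ℕ} (a b c : Fin n) (i : Fin 3) : Fin n :=
  if i = 0 then a else if i = 1 then b else c

/-- The vote `v` satisfies the never condition `iNj` on the triple `a < b < c`
(`i j : Fin 3`, both 0-indexed): the `i`-th smallest element of the triple is
not in the `j`-th position (from the top) of the restriction of `v` to the
triple. -/
def VNever {n : ℕ} (v : Vote n) (a b c : Fin n) (i j : Fin 3) : Prop :=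
  posIn v a b c (tElem a b c i) ≠ (j : ℕ)

/-- The domain `D` satisfies the never condition `iNj` on the triple
`a < b < c` if every vote in `D` does. -/
def DNever {n : ℕ} (D : Set (Vote n)) (a b c : Fin n) (i j : Fin 3) : Prop :=
  ∀ v ∈ D, VNever v a b c i j

/-- A pair (triple, never condition): the triple is `a < b < c` and the
condition is `iNj` (0-indexed). -/
structure NC (n : ℕ) where
  a : Fin n
  b : Fin n
  c : Fin n
  i : Fin 3
  j : Fin 3

/-- The pair is valid: its alternatives do form a triple `a < b < c`. -/
def NC.valid {n : ℕ} (p : NC n) : Prop := p.a < p.b ∧ p.b < p.c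

/-- The vote `v` satisfies the never condition of the pair `p` on its triple. -/
def NC.holdsFor {n : ℕ} (p : NC n) (v : Vote n) : Prop :=
  VNever v p.a p.b p.c p.i p.j

/-- `N(D)`: the set of all pairs (triple, never condition) satisfied by `D`. -/
def NSet {n : ℕ} (D : Set (Vote n)) : Set (NC n) :=
  {p | p.valid ∧ DNever D p.a p.b p.c p.i p.j}

/-- `D` is full: it contains every vote that satisfies, for every pair in
`N(D)`, the corresponding never condition. -/
def IsFull {n : ℕ} (D : Set (Vote n)) : Prop :=
  ∀ v : Vote n, (∀ p ∈ NSet D, p.holdsFor v) → v ∈ D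

/-- `D` is a maximal Condorcet domain: it is a Condorcet domain and no
Condorcet domain strictly contains it. -/
def IsMaximalCD {n : ℕ} (D : Set (Vote n)) : Prop :=
  IsCondorcet D ∧ ∀ D' : Set (Vote n), IsCondorcet D' → ¬ D ⊂ D'

/-- A set `S` of (triple, never condition) pairs implies the never condition
`iNj` on the triple `a < b < c`: every vote satisfying all the conditions in
`S` satisfies `iNj` on this triple. -/
def Implies {n : ℕ} (S : Set (NC n)) (a b c : Fin n) (i j : Fin 3) : Prop :=
  ∀ v : Vote n, (∀ p ∈ S, p.holdsFor v) → VNever v a b c i j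

/-- `N(D)_T`: the set of pairs in `N(D)` whose triple differs from the triple
`(a, b, c)`. -/
def NSetOff {n : ℕ} (D : Set (Vote n)) (a b c : Fin n) : Set (NC n) :=
  {p ∈ NSet D | (p.a, p.b, p.c) ≠ (a, b, c)}

/-- The action of a bijection `π` of the alternatives on a vote: `π(v)` ranks
`x` above `y` iff `v` ranks `π⁻¹ x` above `π⁻¹ y`.  In our encoding this is
the composition `π * v`. -/
def pVote {n : ℕ} (π : Equiv.Perm (Fin n)) (v : Vote n) : Vote n := π * v

/-- `π(D) = {π(v) : v ∈ D}`. -/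
def pDom {n : ℕ} (π : Equiv.Perm (Fin n)) (D : Set (Vote n)) : Set (Vote n) :=
  pVote π '' D

/-- The standard order `α = 1 2 … n` (alternative `k` in position `k`). -/
def stdOrder (n : ℕ) : Vote n := 1

/-- `v` is single-peaked with respect to the natural axis `1 < 2 < … < n`:
letting `p` be the top-ranked alternative of `v`, alternatives below `p` on
the axis are ranked in increasing order and alternatives above `p` are ranked
in decreasing order. -/
def SinglePeaked {n : ℕ} (v : Vote n) : Prop :=
  ∃ p : Fin n, (∀ x : Fin n, x ≠ p → Above v p x) ∧
    (∀ a b : Fin n, a < b → b ≤ p → Above v b a) ∧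
    (∀ a b : Fin n, p ≤ a → a < b → Above v a b)


/-! A single-peaked vote never ranks the middle one (on the axis) of three alternatives last
among them. So if `m` lies between `x` and `y` on the axis, every single-peaked voter ranking
`x` above `m` also ranks `x` above `y`; in a majority cycle through `x`, `m`, `y` this turns the
edge `x → m` into an edge `x → y` opposing the edge `y → x`, hence majorities of single-peaked
profiles are transitive.

Conversely, a vote `v` that is not single-peaked has a valley `a < b < c` with `b` ranked below
`a` and `c`. If `v` ranks `a` above `c`, the single-peaked votes `b a c …` and `c b a …` join
`v` in a Condorcet paradox `a → c → b → a`; if `v` ranks `c` above `a`, the votes `b c a …` and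
`a b c …` do. So no Condorcet domain contains `v` together with all single-peaked votes. -/

open Set

section Votes

variable {n : ℕ}

lemma Above.trans {v : Vote n} {a b c : Fin n} (hab : Above v a b) (hbc : Above v b c) :
    Above v a c :=
  lt_trans hab hbc

lemma Above.asymm {v : Vote n} {a b : Fin n} (h : Above v a b) : ¬ Above v b a :=
  lt_asymm h

lemma above_or_above (v : Vote n) {a b : Fin n} (h : a ≠ b) : Above v a b ∨ Above v b a :=
  lt_or_gt_of_ne (v.symm.injective.ne h)

lemma not_above_iff {v : Vote n} {a b : Fin n} (h : a ≠ b) : ¬ Above v a b ↔ Above v b a :=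
  ⟨(above_or_above v h).resolve_left, Above.asymm⟩

lemma above_sort_iff {β : Type*} [LinearOrder β] {f : Fin n → β} (hf : Function.Injective f)
    {x y : Fin n} : Above (Tuple.sort f) x y ↔ f x < f y := by
  have hmono : StrictMono (f ∘ Tuple.sort f) :=
    (Tuple.monotone_sort f).strictMono_of_injective (hf.comp (Tuple.sort f).injective)
  simpa [Above] using
    (hmono.lt_iff_lt (a := (Tuple.sort f).symm x) (b := (Tuple.sort f).symm y)).symm

end Votes

section Majority

variable {n : ℕ} {l : List (Vote n)} {a b c d : Fin n}

lemma countP_above_add_countP_above (l : List (Vote n)) (h : a ≠ b) :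
    l.countP (fun v => decide (Above v a b)) + l.countP (fun v => decide (Above v b a)) =
      l.length := by
  rw [List.length_eq_countP_add_countP (fun v => decide (Above v a b))]
  congr 1
  exact List.countP_congr fun v _ => by simp [not_above_iff h]

lemma maj_irrefl (l : List (Vote n)) (a : Fin n) : ¬ Maj l a a := by
  simp [Maj, Above]

lemma Maj.ne (h : Maj l a b) : a ≠ b := by
  rintro rfl
  exact maj_irrefl l a h

lemma Maj.asymm (h : Maj l a b) : ¬ Maj l b a := by
  have := countP_above_add_countP_above l h.ne
  unfold Maj at *
  omega

lemma maj_or_maj (hodd : Odd l.length) (h : a ≠ b) : Maj l a b ∨ Maj l b a := by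
  obtain ⟨k, hk⟩ := hodd
  have := countP_above_add_countP_above l h
  unfold Maj
  omega

lemma Maj.mono (h : Maj l a b) (hcd : ∀ v ∈ l, Above v a b → Above v c d) : Maj l c d :=
  h.trans_le <| Nat.mul_le_mul_left 2 <| List.countP_mono_left fun v hv => by
    simpa using hcd v hv

lemma Maj.of_median (h : Maj l a b) (hb : ∀ v ∈ l, Above v b a ∨ Above v b c) : Maj l a c :=
  h.mono fun v hv hab => hab.trans ((hb v hv).resolve_left hab.asymm)

lemma isStrictTotalOrder_maj (hodd : Odd l.length)
    (htrans : ∀ a b c, Maj l a b → Maj l b c → Maj l a c) :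
    IsStrictTotalOrder (Fin n) (Maj l) where
  trichotomous _ _ hab hba := by_contra fun h => (maj_or_maj hodd h).elim hab hba
  irrefl := maj_irrefl l
  trans := htrans

lemma maj_triple_iff {u v w : Vote n} :
    Maj [u, v, w] a b ↔ Above u a b ∧ Above v a b ∨ Above u a b ∧ Above w a b ∨
      Above v a b ∧ Above w a b := by
  simp only [Maj, List.countP_cons, List.countP_nil, List.length_cons, List.length_nil]
  by_cases hu : Above u a b <;> by_cases hv : Above v a b <;> by_cases hw : Above w a b <;>
    simp [hu, hv, hw]

end Majority

lemma mem_uIoo_cyclic_of_ne {α : Type*} [LinearOrder α] {a b c : α} (hab : a ≠ b) (hbc : b ≠ c)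
    (hca : c ≠ a) : a ∈ uIoo c b ∨ b ∈ uIoo a c ∨ c ∈ uIoo b a := by
  simp only [uIoo_eq_union, mem_union, mem_Ioo]
  grind

section SinglePeaked

variable {n : ℕ}

lemma SinglePeaked.above_or_above {v : Vote n} (hv : SinglePeaked v) {m x y : Fin n}
    (hm : m ∈ uIoo x y) : Above v m x ∨ Above v m y := by
  obtain ⟨p, -, hleft, hright⟩ := hv
  rw [uIoo_eq_union] at hm
  rcases hm with ⟨hxm, hmy⟩ | ⟨hym, hmx⟩ <;> rcases le_total m p with hmp | hpm
  · exact .inl (hleft x m hxm hmp)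
  · exact .inr (hright m y hpm hmy)
  · exact .inr (hleft y m hym hmp)
  · exact .inl (hright m x hpm hmx)

lemma singlePeaked_iff (hn : 0 < n) {v : Vote n} :
    SinglePeaked v ↔ ∀ x y z : Fin n, x < y → y < z → Above v y x ∨ Above v y z := by
  refine ⟨fun hv x y z hxy hyz => hv.above_or_above (mem_uIoo_of_lt hxy hyz), fun h => ?_⟩
  set p := v ⟨0, hn⟩
  have top (x : Fin n) (hx : x ≠ p) : Above v p x := by
    have : v.symm x ≠ ⟨0, hn⟩ := fun h => hx (v.symm_apply_eq.mp h)
    simp only [Above, p, Equiv.symm_apply_apply]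
    exact lt_of_le_of_ne (Nat.zero_le _) this.symm
  have not_above_top (x : Fin n) : ¬ Above v x p := by
    simp only [Above, p, Equiv.symm_apply_apply]
    exact Nat.not_lt_zero _
  refine ⟨p, top, fun a b hab hbp => ?_, fun a b hpa hab => ?_⟩
  · rcases hbp.lt_or_eq with hbp | rfl
    · exact (h a b p hab hbp).resolve_right (not_above_top b)
    · exact top a hab.ne
  · rcases hpa.lt_or_eq with hpa | rfl
    · exact (h p a b hpa hab).resolve_left (not_above_top a)
    · exact top b hab.ne'

theorem isCondorcet_singlePeaked : IsCondorcet {v : Vote n | SinglePeaked v} := by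
  intro l hodd hl
  refine isStrictTotalOrder_maj hodd fun a b c hab hbc => ?_
  have hac : a ≠ c := fun h => hab.asymm (h ▸ hbc)
  refine (maj_or_maj hodd hac).resolve_right fun hca => ?_
  have median {m x y : Fin n} (hm : m ∈ uIoo x y) : ∀ v ∈ l, Above v m x ∨ Above v m y :=
    fun v hv => (hl v hv).above_or_above hm
  rcases mem_uIoo_cyclic_of_ne hab.ne hbc.ne hac.symm with h | h | h
  · exact (hca.of_median (median h)).asymm hbc
  · exact (hab.of_median (median h)).asymm hca
  · exact (hbc.of_median (median h)).asymm hab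

lemma exists_valley_of_not_singlePeaked (hn : 0 < n) {v : Vote n} (hv : ¬ SinglePeaked v) :
    ∃ a b c : Fin n, a < b ∧ b < c ∧ Above v a b ∧ Above v c b := by
  simp only [singlePeaked_iff hn, not_forall, not_or] at hv
  obtain ⟨a, b, c, hab, hbc, hba, hbc'⟩ := hv
  exact ⟨a, b, c, hab, hbc, (not_above_iff hab.ne').1 hba, (not_above_iff hbc.ne).1 hbc'⟩

lemma singlePeaked_sort {β : Type*} [LinearOrder β] (hn : 0 < n) {f : Fin n → β}
    (hf : Function.Injective f) (h : ∀ x y z : Fin n, x < y → y < z → f y < f x ∨ f y < f z) :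
    SinglePeaked (Tuple.sort f) :=
  (singlePeaked_iff hn).2 fun x y z hxy hyz => by
    simpa only [above_sort_iff hf] using h x y z hxy hyz

end SinglePeaked

section Cycle

variable {n : ℕ} {D : Set (Vote n)}

lemma IsCondorcet.not_maj_cycle (hD : IsCondorcet D) {l : List (Vote n)} (hodd : Odd l.length)
    (hl : ∀ v ∈ l, v ∈ D) {a b c : Fin n} (hab : Maj l a b) (hbc : Maj l b c) : ¬ Maj l c a := by
  have := hD l hodd hl
  exact fun hca => irrefl_of (Maj l) a (trans_of _ (trans_of _ hab hbc) hca)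

lemma IsCondorcet.not_paradox (hD : IsCondorcet D) {u v w : Vote n} (hu : u ∈ D) (hv : v ∈ D)
    (hw : w ∈ D) {t s b : Fin n} (hu₁ : Above u t s) (hu₂ : Above u s b) (hv₁ : Above v b t)
    (hv₂ : Above v t s) (hw₁ : Above w s b) (hw₂ : Above w b t) : False := by
  refine hD.not_maj_cycle (l := [u, v, w]) ⟨1, rfl⟩ ?_ (maj_triple_iff.2 (.inl ⟨hu₁, hv₂⟩))
    (maj_triple_iff.2 (.inr (.inl ⟨hu₂, hw₁⟩))) (maj_triple_iff.2 (.inr (.inr ⟨hv₁, hw₂⟩)))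
  simp only [List.mem_cons, List.not_mem_nil, or_false]
  rintro x (rfl | rfl | rfl) <;> assumption

end Cycle

section PeakVotes

variable {n : ℕ} {p x y : Fin n}

/-- As a sort key (smaller is better): `p` first, then the alternatives left of `p`, then those
right of `p`, each side by distance from `p`. -/
def leftFirstKey (p x : Fin n) : ℕ := if x ≤ p then (p : ℕ) - x else x

/-- As a sort key: `p` first, then the alternatives right of `p`, then those left of `p`, each
side by distance from `p`. -/
def rightFirstKey (p x : Fin n) : ℕ := if p ≤ x then (x : ℕ) - p else n - x

lemma leftFirstKey_injective (p : Fin n) : Function.Injective (leftFirstKey p) := by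
  intro x y h
  simp only [leftFirstKey] at h
  split_ifs at h <;> omega

lemma rightFirstKey_injective (p : Fin n) : Function.Injective (rightFirstKey p) := by
  intro x y h
  simp only [rightFirstKey] at h
  split_ifs at h <;> omega

lemma singlePeaked_sort_leftFirstKey (p : Fin n) : SinglePeaked (Tuple.sort (leftFirstKey p)) :=
  singlePeaked_sort p.pos (leftFirstKey_injective p) fun x y z hxy hyz => by
    simp only [leftFirstKey]
    split_ifs <;> omega

lemma singlePeaked_sort_rightFirstKey (p : Fin n) : SinglePeaked (Tuple.sort (rightFirstKey p)) :=
  singlePeaked_sort p.pos (rightFirstKey_injective p) fun x y z hxy hyz => by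
    simp only [rightFirstKey]
    split_ifs <;> omega

lemma above_sort_leftFirstKey_of_lt_of_le (hxy : x < y) (hyp : y ≤ p) :
    Above (Tuple.sort (leftFirstKey p)) y x := by
  rw [above_sort_iff (leftFirstKey_injective p)]
  simp only [leftFirstKey]
  split_ifs <;> omega

lemma above_sort_leftFirstKey_of_le_of_lt (hxp : x ≤ p) (hpy : p < y) :
    Above (Tuple.sort (leftFirstKey p)) x y := by
  rw [above_sort_iff (leftFirstKey_injective p)]
  simp only [leftFirstKey]
  split_ifs <;> omega

lemma above_sort_rightFirstKey_of_le_of_lt (hpx : p ≤ x) (hxy : x < y) :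
    Above (Tuple.sort (rightFirstKey p)) x y := by
  rw [above_sort_iff (rightFirstKey_injective p)]
  simp only [rightFirstKey]
  split_ifs <;> omega

lemma above_sort_rightFirstKey_of_lt_of_le (hxp : x < p) (hpy : p ≤ y) :
    Above (Tuple.sort (rightFirstKey p)) y x := by
  rw [above_sort_iff (rightFirstKey_injective p)]
  simp only [rightFirstKey]
  split_ifs <;> omega

end PeakVotes

/-- (Black) The set of all single-peaked linear orders with respect to the
natural axis is a maximal Condorcet domain. -/
theorem stmt15 {n : ℕ} (hn : 1 ≤ n) :
    IsMaximalCD {v : Vote n | SinglePeaked v} := by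
  refine ⟨isCondorcet_singlePeaked, fun D hD hsub => ?_⟩
  obtain ⟨v, hvD, hv⟩ := exists_of_ssubset hsub
  obtain ⟨a, b, c, hab, hbc, hvab, hvcb⟩ := exists_valley_of_not_singlePeaked hn hv
  rcases above_or_above v (hab.trans hbc).ne with hvac | hvca
  · exact hD.not_paradox hvD (hsub.subset (singlePeaked_sort_leftFirstKey b))
      (hsub.subset (singlePeaked_sort_leftFirstKey c)) hvac hvcb
      (above_sort_leftFirstKey_of_lt_of_le hab le_rfl)
      (above_sort_leftFirstKey_of_le_of_lt hab.le hbc)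
      (above_sort_leftFirstKey_of_lt_of_le hbc le_rfl)
      (above_sort_leftFirstKey_of_lt_of_le hab hbc.le)
  · exact hD.not_paradox hvD (hsub.subset (singlePeaked_sort_rightFirstKey b))
      (hsub.subset (singlePeaked_sort_rightFirstKey a)) hvca hvab
      (above_sort_rightFirstKey_of_le_of_lt le_rfl hbc)
      (above_sort_rightFirstKey_of_lt_of_le hab hbc.le)
      (above_sort_rightFirstKey_of_le_of_lt le_rfl hab)
      (above_sort_rightFirstKey_of_le_of_lt hab.le hbc)
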